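/- Let A be the adjacency matrix of an undirected, unweighted graph on n nodes with at least one edge, let d = A·1, let c : ℕ → ℝ be nonnegative coefficients with cₖ = 0 for all even k, such that for every node i the series xᵢ = ∑ₖ cₖ·(Aᵏ·1)ᵢ converges. If the graph is regular (all entries of d equal), then n·(dᵀx) = (1ᵀd)·(1ᵀx); conversely, if the graph is not regular and c₁ > 0, then the inequality is strict: n·(dᵀx) > (1ᵀd)·(1ᵀx). -/
import Mathlib

open Matrix


lemma sum_prod_sep {N : ℕ} (a b : Fin N → ℝ) :
    ∑ p : Fin N × Fin N, a p.1 * b p.2 = (∑ i, a i) * (∑ i, b i) := by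
  rw [Fintype.sum_prod_type]
  exact (Finset.sum_mul_sum _ _ _ _).symm

lemma spectral_moment {n : ℕ} (A : Matrix (Fin n) (Fin n) ℝ) (hA : A.IsHermitian) :
    ∃ b lam : Fin n → ℝ, (∀ i, 0 ≤ b i) ∧
      ∀ m : ℕ, (1 : Fin n → ℝ) ⬝ᵥ ((A ^ m) *ᵥ 1) = ∑ i, b i * lam i ^ m := by
  set U : Matrix (Fin n) (Fin n) ℝ := (hA.eigenvectorUnitary : Matrix (Fin n) (Fin n) ℝ)
  set lam : Fin n → ℝ := hA.eigenvalues
  have hdiag : (diagonal (RCLike.ofReal ∘ lam) : Matrix (Fin n) (Fin n) ℝ) = diagonal lam := by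
    congr 1
  have hsp : A = U * diagonal lam * star U := by
    rw [← hdiag]; exact hA.spectral_theorem
  have hUU : U * star U = 1 := (Matrix.mem_unitaryGroup_iff).mp hA.eigenvectorUnitary.2
  have hsU : star U * U = 1 := (Matrix.mem_unitaryGroup_iff').mp hA.eigenvectorUnitary.2
  have hpow : ∀ m : ℕ, A ^ m = U * diagonal (fun i => lam i ^ m) * star U := by
    intro m
    induction m with
    | zero => simpa using hUU.symm
    | succ m ih =>
        rw [pow_succ, ih, hsp]
        rw [show U * diagonal (fun i => lam i ^ m) * star U * (U * diagonal lam * star U)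
          = U * diagonal (fun i => lam i ^ m) * (star U * U) * diagonal lam * star U by
            noncomm_ring]
        rw [hsU, mul_one, mul_assoc _ _ (diagonal lam), diagonal_mul_diagonal]
        simp [pow_succ]
  set p : Fin n → ℝ := vecMul 1 U with hp
  refine ⟨fun i => p i * p i, lam, fun i => mul_self_nonneg _, fun m => ?_⟩
  rw [hpow m, ← mulVec_mulVec, ← mulVec_mulVec, dotProduct_mulVec (1 : Fin n → ℝ) U]
  have hstar : (star U) *ᵥ (1 : Fin n → ℝ) = p := by
    rw [hp, ← mulVec_transpose]
    congr 1
  rw [hstar]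
  simp [dotProduct, mulVec, diagonal, Finset.mul_sum]
  apply Finset.sum_congr rfl
  intro i _
  ring

lemma weighted_chebyshev {N : ℕ} (w f g : Fin N → ℝ) (hw : ∀ i, 0 ≤ w i)
    (h : ∀ i j, 0 ≤ (f i - f j) * (g i - g j)) :
    (∑ i, w i * f i) * (∑ i, w i * g i) ≤ (∑ i, w i) * (∑ i, w i * (f i * g i)) := by
  have key : 0 ≤ ∑ p : Fin N × Fin N, w p.1 * w p.2 * ((f p.1 - f p.2) * (g p.1 - g p.2)) := by
    apply Finset.sum_nonneg
    intro p _
    exact mul_nonneg (mul_nonneg (hw p.1) (hw p.2)) (h p.1 p.2)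
  have s1 : ∑ p : Fin N × Fin N, (w p.1 * (f p.1 * g p.1)) * w p.2
      = (∑ i, w i * (f i * g i)) * (∑ i, w i) := sum_prod_sep (fun i => w i * (f i * g i)) w
  have s2 : ∑ p : Fin N × Fin N, w p.1 * (w p.2 * (f p.2 * g p.2))
      = (∑ i, w i) * (∑ i, w i * (f i * g i)) := sum_prod_sep w (fun i => w i * (f i * g i))
  have s3 : ∑ p : Fin N × Fin N, (w p.1 * f p.1) * (w p.2 * g p.2)
      = (∑ i, w i * f i) * (∑ i, w i * g i) := sum_prod_sep (fun i => w i * f i) (fun i => w i * g i)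
  have s4 : ∑ p : Fin N × Fin N, (w p.1 * g p.1) * (w p.2 * f p.2)
      = (∑ i, w i * g i) * (∑ i, w i * f i) := sum_prod_sep (fun i => w i * g i) (fun i => w i * f i)
  have esum : ∑ p : Fin N × Fin N, w p.1 * w p.2 * ((f p.1 - f p.2) * (g p.1 - g p.2))
      = (∑ p : Fin N × Fin N, ((w p.1 * (f p.1 * g p.1)) * w p.2
          + w p.1 * (w p.2 * (f p.2 * g p.2))))
        - ∑ p : Fin N × Fin N, ((w p.1 * f p.1) * (w p.2 * g p.2)
          + (w p.1 * g p.1) * (w p.2 * f p.2)) := by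
    rw [← Finset.sum_sub_distrib]
    exact Finset.sum_congr rfl fun p _ => by ring
  rw [esum, Finset.sum_add_distrib, Finset.sum_add_distrib, s1, s2, s3, s4] at key
  linarith

lemma var_pos {N : ℕ} (v : Fin N → ℝ) (h : ¬ ∀ i j, v i = v j) :
    (∑ i, v i) * (∑ i, v i) < (N : ℝ) * (∑ i, v i * v i) := by
  push_neg at h
  obtain ⟨i, j, hij⟩ := h
  have key : 0 < ∑ p : Fin N × Fin N, (v p.1 - v p.2) * (v p.1 - v p.2) := by
    apply Finset.sum_pos'
    · intro p _
      exact mul_self_nonneg _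
    · exact ⟨(i, j), Finset.mem_univ _, mul_self_pos.mpr (sub_ne_zero_of_ne hij)⟩
  have s1 : ∑ p : Fin N × Fin N, (v p.1 * v p.1) * (1 : ℝ)
      = (∑ i, v i * v i) * (∑ _i : Fin N, (1 : ℝ)) := sum_prod_sep (fun i => v i * v i) (fun _ => (1:ℝ))
  have s2 : ∑ p : Fin N × Fin N, (1 : ℝ) * (v p.2 * v p.2)
      = (∑ _i : Fin N, (1 : ℝ)) * (∑ i, v i * v i) := sum_prod_sep (fun _ => (1:ℝ)) (fun i => v i * v i)
  have s3 : ∑ p : Fin N × Fin N, v p.1 * v p.2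
      = (∑ i, v i) * (∑ i, v i) := sum_prod_sep v v
  have hone : (∑ _i : Fin N, (1 : ℝ)) = (N : ℝ) := by simp
  have esum : ∑ p : Fin N × Fin N, (v p.1 - v p.2) * (v p.1 - v p.2)
      = (∑ p : Fin N × Fin N, ((v p.1 * v p.1) * (1 : ℝ) + (1 : ℝ) * (v p.2 * v p.2)))
        - ∑ p : Fin N × Fin N, (v p.1 * v p.2 + v p.1 * v p.2) := by
    rw [← Finset.sum_sub_distrib]
    exact Finset.sum_congr rfl fun p _ => by ring
  rw [esum, Finset.sum_add_distrib, Finset.sum_add_distrib, s1, s2, s3, hone] at key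
  linarith

lemma key_ineq {n : ℕ} (A : Matrix (Fin n) (Fin n) ℝ) (hA : A.IsHermitian)
    {k : ℕ} (hk : Odd k) :
    ((1 : Fin n → ℝ) ⬝ᵥ (A *ᵥ 1)) * ((1 : Fin n → ℝ) ⬝ᵥ ((A ^ k) *ᵥ 1))
      ≤ (n : ℝ) * ((1 : Fin n → ℝ) ⬝ᵥ ((A ^ (k + 1)) *ᵥ 1)) := by
  obtain ⟨b, lam, hb, hs⟩ := spectral_moment A hA
  have hn : (n : ℝ) = ∑ i, b i := by
    have h0 := hs 0
    simp only [pow_zero, one_mulVec, mul_one] at h0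
    rw [← h0]
    simp [dotProduct]
  have h1 : (1 : Fin n → ℝ) ⬝ᵥ (A *ᵥ 1) = ∑ i, b i * lam i := by
    have := hs 1
    simpa using this
  have hmono : ∀ i j, 0 ≤ (lam i - lam j) * ((fun i => lam i ^ k) i - (fun i => lam i ^ k) j) := by
    intro i j
    simp only
    rcases le_total (lam i) (lam j) with h | h
    · have h2 : lam i ^ k ≤ lam j ^ k := (hk.strictMono_pow (R := ℝ)).monotone h
      nlinarith
    · have h2 : lam j ^ k ≤ lam i ^ k := (hk.strictMono_pow (R := ℝ)).monotone h
      nlinarith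
  have cheb := weighted_chebyshev b lam (fun i => lam i ^ k) hb hmono
  rw [hn, h1, hs k, hs (k + 1)]
  calc (∑ i, b i * lam i) * (∑ i, b i * lam i ^ k)
      ≤ (∑ i, b i) * (∑ i, b i * (lam i * lam i ^ k)) := cheb
    _ = (∑ i, b i) * (∑ i, b i * lam i ^ (k + 1)) := by
        congr 1
        exact Finset.sum_congr rfl fun i _ => by rw [pow_succ']


/-- For odd power-series centrality: if the graph is regular then equality holds in the
generalized friendship paradox, and if the graph is not regular and `c₁ > 0` then the
inequality is strict. -/
theorem odd_power_series_centrality_paradox_equality (n : ℕ)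
    (A : Matrix (Fin n) (Fin n) ℝ)
    (hA01 : ∀ i j, A i j = 0 ∨ A i j = 1)
    (hsym : ∀ i j, A i j = A j i)
    (hdiag : ∀ i, A i i = 0)
    (hedge : ∃ i j, A i j ≠ 0)
    (d : Fin n → ℝ) (hd : d = A.mulVec 1)
    (c : ℕ → ℝ) (hc : ∀ k, 0 ≤ c k)
    (hodd : ∀ k : ℕ, Even k → c k = 0)
    (hsummable : ∀ i, Summable fun k : ℕ => c k * ((A ^ k).mulVec 1) i)
    (x : Fin n → ℝ) (hx : ∀ i, x i = ∑' k : ℕ, c k * ((A ^ k).mulVec 1) i) :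
    ((∀ i j, d i = d j) → (n : ℝ) * (d ⬝ᵥ x) = (∑ i, d i) * (∑ i, x i)) ∧
      ((¬ ∀ i j, d i = d j) → 0 < c 1 →
        (n : ℝ) * (d ⬝ᵥ x) > (∑ i, d i) * (∑ i, x i)) := by
  have hherm : A.IsHermitian := by
    ext i j
    simp only [conjTranspose_apply, RCLike.star_def, starRingEnd_apply, star_trivial]
    exact hsym j i
  set y : ℕ → Fin n → ℝ := fun k => (A ^ k).mulVec 1 with hy
  -- basic dot product facts
  have F1 : ∀ k : ℕ, d ⬝ᵥ y k = (1 : Fin n → ℝ) ⬝ᵥ ((A ^ (k + 1)) *ᵥ 1) := by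
    intro k
    have hAT : Aᵀ = A := by
      ext i j
      exact hsym j i
    have h : (1 : Fin n → ℝ) ⬝ᵥ ((A ^ (k + 1)) *ᵥ 1) = (Aᵀ *ᵥ 1) ⬝ᵥ ((A ^ k) *ᵥ 1) := by
      rw [pow_succ', ← mulVec_mulVec, dotProduct_mulVec, ← mulVec_transpose]
    rw [h, hAT, ← hd]
  have F2 : ∑ i, d i = (1 : Fin n → ℝ) ⬝ᵥ (A *ᵥ 1) := by
    rw [hd]
    simp [dotProduct]
  have F3 : ∀ k : ℕ, ∑ i, y k i = (1 : Fin n → ℝ) ⬝ᵥ y k := by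
    intro k
    simp [dotProduct]
  -- term identities
  have hterm1 : ∀ k : ℕ, c k * (d ⬝ᵥ y k) = ∑ i, d i * (c k * y k i) := by
    intro k
    rw [dotProduct, Finset.mul_sum]
    exact Finset.sum_congr rfl fun i _ => by ring
  have hterm2 : ∀ k : ℕ, c k * ((1 : Fin n → ℝ) ⬝ᵥ y k) = ∑ i, c k * y k i := by
    intro k
    rw [dotProduct, Finset.mul_sum]
    exact Finset.sum_congr rfl fun i _ => by simp
  -- summability
  have hS1 : Summable fun k : ℕ => c k * (d ⬝ᵥ y k) := by
    have : Summable fun k : ℕ => ∑ i, d i * (c k * y k i) :=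
      summable_sum fun i _ => (hsummable i).mul_left (d i)
    exact this.congr fun k => (hterm1 k).symm
  have hS2 : Summable fun k : ℕ => c k * ((1 : Fin n → ℝ) ⬝ᵥ y k) := by
    have : Summable fun k : ℕ => ∑ i, c k * y k i :=
      summable_sum fun i _ => hsummable i
    exact this.congr fun k => (hterm2 k).symm
  -- expansions
  have E1 : d ⬝ᵥ x = ∑' k : ℕ, c k * (d ⬝ᵥ y k) := by
    calc d ⬝ᵥ x = ∑ i, d i * x i := rfl
      _ = ∑ i, ∑' k : ℕ, d i * (c k * y k i) := by
          refine Finset.sum_congr rfl fun i _ => ?_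
          rw [hx i]
          exact (tsum_mul_left).symm
      _ = ∑' k : ℕ, ∑ i, d i * (c k * y k i) :=
          (Summable.tsum_finsetSum fun i _ => (hsummable i).mul_left (d i)).symm
      _ = ∑' k : ℕ, c k * (d ⬝ᵥ y k) := tsum_congr fun k => (hterm1 k).symm
  have E2 : ∑ i, x i = ∑' k : ℕ, c k * ((1 : Fin n → ℝ) ⬝ᵥ y k) := by
    calc ∑ i, x i = ∑ i, ∑' k : ℕ, c k * y k i := by
          exact Finset.sum_congr rfl fun i _ => hx i
      _ = ∑' k : ℕ, ∑ i, c k * y k i := (Summable.tsum_finsetSum fun i _ => hsummable i).symm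
      _ = ∑' k : ℕ, c k * ((1 : Fin n → ℝ) ⬝ᵥ y k) := tsum_congr fun k => (hterm2 k).symm
  constructor
  · -- regular case
    intro hreg
    calc (n : ℝ) * (d ⬝ᵥ x) = ∑ _j : Fin n, (d ⬝ᵥ x) := by
          rw [Finset.sum_const, Finset.card_univ, Fintype.card_fin, nsmul_eq_mul]
      _ = ∑ j : Fin n, ∑ i, d j * x i := by
          refine Finset.sum_congr rfl fun j _ => ?_
          rw [show (d ⬝ᵥ x) = ∑ i, d i * x i from rfl]
          exact Finset.sum_congr rfl fun i _ => by rw [hreg i j]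
      _ = ∑ j : Fin n, d j * ∑ i, x i := by
          refine Finset.sum_congr rfl fun j _ => (Finset.mul_sum _ _ _).symm
      _ = (∑ i, d i) * (∑ i, x i) := by rw [← Finset.sum_mul]
  · -- irregular strict case
    intro hnreg hc1
    set F : ℕ → ℝ := fun k =>
      (n : ℝ) * (c k * (d ⬝ᵥ y k)) - (∑ i, d i) * (c k * ((1 : Fin n → ℝ) ⬝ᵥ y k)) with hF
    have hFsum : Summable F := (hS1.mul_left _).sub (hS2.mul_left _)
    have hdiff : (n : ℝ) * (d ⬝ᵥ x) - (∑ i, d i) * (∑ i, x i) = ∑' k, F k := by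
      rw [E1, E2, ← tsum_mul_left, ← tsum_mul_left]
      exact (Summable.tsum_sub (hS1.mul_left _) (hS2.mul_left _)).symm
    have hFnonneg : ∀ k : ℕ, k ≠ 1 → 0 ≤ F k := by
      intro k _
      rcases Nat.even_or_odd k with he | ho
      · simp [hF, hodd k he]
      · have hkey : (∑ i, d i) * ((1 : Fin n → ℝ) ⬝ᵥ y k) ≤ (n : ℝ) * (d ⬝ᵥ y k) := by
          rw [F2, F1 k]
          exact key_ineq A hherm ho
        have e : F k = c k * ((n : ℝ) * (d ⬝ᵥ y k)
            - (∑ i, d i) * ((1 : Fin n → ℝ) ⬝ᵥ y k)) := by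
          rw [hF]; ring
        rw [e]
        exact mul_nonneg (hc k) (by linarith)
    have hy1 : y 1 = d := by rw [hy, hd]; simp
    have hF1 : 0 < F 1 := by
      have hvar := var_pos d hnreg
      have e : F 1 = c 1 * ((n : ℝ) * (∑ i, d i * d i) - (∑ i, d i) * (∑ i, d i)) := by
        simp only [hF, hy1]
        have hdd : d ⬝ᵥ d = ∑ i, d i * d i := rfl
        have h1d : (1 : Fin n → ℝ) ⬝ᵥ d = ∑ i, d i := by simp [dotProduct]
        rw [hdd, h1d]
        ring
      rw [e]
      exact mul_pos hc1 (by linarith)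
    have hle : F 1 ≤ ∑' k, F k := Summable.le_tsum hFsum 1 fun k _ => hFnonneg k (by assumption)
    have : 0 < (n : ℝ) * (d ⬝ᵥ x) - (∑ i, d i) * (∑ i, x i) := by
      rw [hdiff]; linarith
    linarith
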